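/- For integers n ≥ 1, a ≥ 1, and b ≥ 1, one has Q_n(a,b) = 2·Q_{n-1}(a,b) + Q_{n-1}(a−1, b+1) + Q_{n-1}(a+1, b−1) − Q_{n-1}(a+1, b) − Q_{n-1}(a, b+1). -/

import Mathlib

/-- A Dyck path: a finite sequence of ±1 steps with all partial sums nonnegative
and total sum zero. -/
def IsDyckPath (p : List ℤ) : Prop :=
  (∀ s ∈ p, s = 1 ∨ s = -1) ∧ (∀ k, 0 ≤ (p.take k).sum) ∧ p.sum = 0

/-- The height of a path: the maximum of its partial sums (0 for the empty path). -/
def pathHeight (p : List ℤ) : ℕ :=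
  Finset.sup (Finset.range (p.length + 1)) (fun k => ((p.take k).sum).toNat)

/-- Super-Catalan numbers `T(m,n) = (2m)!(2n)!/(2·m!·n!·(m+n)!)`, as a rational number. -/
def superCatalan (m n : ℕ) : ℚ :=
  ((2 * m).factorial * (2 * n).factorial : ℚ) /
    (2 * m.factorial * n.factorial * (m + n).factorial)

/-- `G n m k`: the number of `m`-tuples of Dyck paths of total length `2n` all of whose
pairwise height differences are at most `k` (this is `0` when `n < 0`). -/
noncomputable def G (n : ℤ) (m k : ℕ) : ℕ :=
  Nat.card {p : Fin m → List ℤ //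
    (∀ i, IsDyckPath (p i)) ∧
    (∑ i, ((p i).length : ℤ)) = 2 * n ∧
    ∀ i j, |(pathHeight (p i) : ℤ) - (pathHeight (p j) : ℤ)| ≤ (k : ℤ)}

/-- The path-height function `P n [a₁,…,aₘ]`: the number of `m`-tuples of Dyck paths
of total length `2n` whose `i`-th path has height `aᵢ`. -/
noncomputable def P (n : ℤ) (a : List ℕ) : ℕ :=
  Nat.card {p : Fin a.length → List ℤ //
    (∀ i, IsDyckPath (p i)) ∧
    (∑ i, ((p i).length : ℤ)) = 2 * n ∧
    ∀ i, pathHeight (p i) = a.get i}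

/-- `Qx n x [a₀,…,a_k]` is `P n` evaluated at `a₀` copies of `x`, `a₁` copies of `x+1`, …,
`a_k` copies of `x+k`. -/
noncomputable def Qx (n : ℤ) (x : ℕ) (a : List ℕ) : ℕ :=
  P n (a.zipIdx.flatMap fun q => List.replicate q.1 (x + q.2))

/-- The grouped path-height function `Q n a = ∑_{x=0}^∞ Qx n x a`. Whenever some entry
of `a` is positive (as in every application below) all terms with `x > n` vanish, since
a Dyck path of height at least `x` has length at least `2x`; so the infinite sum equals
its truncation at `x = n`. -/
noncomputable def Q (n : ℤ) (a : List ℕ) : ℕ :=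
  ∑ x ∈ Finset.range (n.toNat + 1), Qx n x a

/-!
Let `B_k` be the generating function, by semilength, of Dyck paths of height `< k`. Splitting a
nonempty path at its first return to the axis gives `B_{k+1} = 1 + X B_k B_{k+1}`, and
`F_h = B_{h+1} - B_h` counts paths of height exactly `h`, so `P_n(a_1, …, a_m)` is the coefficient
of `X^n` in `F_{a_1} ⋯ F_{a_m}`. Eliminating between the equations for `B_x`, `B_{x+1}`, `B_{x+2}`
gives `F_x F_{x+1} = X (F_x + F_{x+1}) (F_x + F_{x+1} - F_x F_{x+1})`; multiplying by
`F_x^{a-1} F_{x+1}^{b-1}` and reading off the coefficient of `X^n` proves the recurrence for each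
`Q^{(x)}`. Summing over `x` proves it for `Q`: the one extra term, `x = n`, vanishes because a
path of height `n + 1` is longer than `2n`.
-/

open PowerSeries Finset Function DyckStep

section WeightGF

variable {α β : Type*}

/-- `Nat.card` is `0` on infinite types, so the lemmas below assume finite fibres. -/
noncomputable def weightGF (w : α → ℕ) : ℤ⟦X⟧ := mk fun n => Nat.card {a // w a = n}

@[simp]
lemma coeff_weightGF (w : α → ℕ) (n : ℕ) : coeff n (weightGF w) = Nat.card {a // w a = n} :=
  coeff_mk _ _

lemma weightGF_eq_of_bijective {wα : α → ℕ} {wβ : β → ℕ} (f : α → β) (hf : Bijective f)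
    (h : ∀ a, wβ (f a) = wα a) : weightGF wα = weightGF wβ := by
  ext n
  simp only [coeff_weightGF, Nat.cast_inj]
  exact Nat.card_congr ((Equiv.ofBijective f hf).subtypeEquiv fun a => by simp [h])

lemma weightGF_sum_elim (wα : α → ℕ) (wβ : β → ℕ) [∀ n, Finite {a // wα a = n}]
    [∀ n, Finite {b // wβ b = n}] : weightGF (Sum.elim wα wβ) = weightGF wα + weightGF wβ := by
  ext n
  simp [Nat.card_congr Equiv.subtypeSum, Nat.card_sum]

lemma weightGF_option (w : α → ℕ) :
    weightGF (fun o : Option α => o.elim 0 (w · + 1)) = 1 + X * weightGF w := by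
  ext (_ | n)
  · have : Unique {o : Option α // o.elim 0 (w · + 1) = 0} :=
      { default := ⟨none, rfl⟩
        uniq := by
          rintro ⟨_ | a, h⟩
          · rfl
          · exact absurd h (by simp) }
    simp
  · rw [map_add, coeff_succ_X_mul, coeff_one, if_neg n.succ_ne_zero, zero_add, coeff_weightGF,
      coeff_weightGF, Nat.cast_inj]
    refine (Nat.card_eq_of_bijective (fun a => ⟨some a.1, by simp [a.2]⟩) ⟨?_, ?_⟩).symm
    · rintro ⟨a, _⟩ ⟨b, _⟩ h
      simpa using h
    · rintro ⟨_ | a, h⟩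
      · simp at h
      · exact ⟨⟨a, by simpa using h⟩, rfl⟩

def fiberAddEquiv (wα : α → ℕ) (wβ : β → ℕ) (n : ℕ) :
    {p : α × β // wα p.1 + wβ p.2 = n} ≃
      Σ ij : antidiagonal n, {a // wα a = ij.1.1} × {b // wβ b = ij.1.2} where
  toFun p := ⟨⟨(wα p.1.1, wβ p.1.2), mem_antidiagonal.2 p.2⟩, ⟨p.1.1, rfl⟩, ⟨p.1.2, rfl⟩⟩
  invFun x := ⟨(x.2.1, x.2.2), by rw [x.2.1.2, x.2.2.2]; exact mem_antidiagonal.1 x.1.2⟩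
  left_inv _ := rfl
  right_inv := by
    rintro ⟨⟨⟨i, j⟩, h⟩, ⟨a, ha⟩, ⟨b, hb⟩⟩
    dsimp only at ha hb
    subst ha hb
    rfl

variable (wα : α → ℕ) (wβ : β → ℕ) [∀ n, Finite {a // wα a = n}] [∀ n, Finite {b // wβ b = n}]

lemma finite_fiber_add (n : ℕ) : Finite {p : α × β // wα p.1 + wβ p.2 = n} :=
  .of_equiv _ (fiberAddEquiv wα wβ n).symm

lemma weightGF_add : weightGF (fun p : α × β => wα p.1 + wβ p.2) = weightGF wα * weightGF wβ := by
  ext n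
  rw [coeff_mul, coeff_weightGF, Nat.card_congr (fiberAddEquiv wα wβ n), Nat.card_sigma,
    Nat.cast_sum]
  simp only [Nat.card_prod, Nat.cast_mul, coeff_weightGF]
  exact sum_coe_sort _ fun ij : ℕ × ℕ =>
    (Nat.card {a // wα a = ij.1} : ℤ) * Nat.card {b // wβ b = ij.2}

end WeightGF

section WeightGFPi

universe u

lemma finite_fiber_pi : ∀ {m : ℕ} {α : Fin m → Type u} (w : ∀ i, α i → ℕ)
    [∀ i n, Finite {a // w i a = n}] (n : ℕ), Finite {q : ∀ i, α i // ∑ i, w i (q i) = n}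
  | 0, _, _, _, _ => Finite.of_subsingleton
  | m + 1, α, w, _, n => by
    have := finite_fiber_pi (α := fun i => α i.succ) (fun i => w i.succ)
    have := finite_fiber_add (w 0) (fun q : ∀ i : Fin m, α i.succ => ∑ i, w i.succ (q i)) n
    exact .of_equiv {p : α 0 × (∀ i : Fin m, α i.succ) // w 0 p.1 + ∑ i, w i.succ (p.2 i) = n}
      ((Fin.consEquiv α).subtypeEquiv fun p => by simp [Fin.sum_univ_succ])

lemma weightGF_pi : ∀ {m : ℕ} {α : Fin m → Type u} (w : ∀ i, α i → ℕ)
    [∀ i n, Finite {a // w i a = n}],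
    weightGF (fun q : ∀ i, α i => ∑ i, w i (q i)) = ∏ i, weightGF (w i)
  | 0, _, _, _ => by
    ext (_ | n) <;> simp
  | m + 1, α, w, _ => by
    have := finite_fiber_pi (α := fun i => α i.succ) (fun i => w i.succ)
    rw [Fin.prod_univ_succ, ← weightGF_pi (α := fun i => α i.succ) (fun i => w i.succ),
      ← weightGF_add]
    exact weightGF_eq_of_bijective (Fin.consEquiv α).symm (Equiv.bijective _) fun q => by
      simp [Fin.sum_univ_succ, Fin.tail]

end WeightGFPi

lemma toNat_sum_take_le_pathHeight (l : List ℤ) (k : ℕ) : (l.take k).sum.toNat ≤ pathHeight l := by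
  rcases le_or_gt k l.length with hk | hk
  · exact Finset.le_sup (f := fun k => (l.take k).sum.toNat) (by simpa [Nat.lt_succ_iff])
  · rw [List.take_of_length_le hk.le]
    have := Finset.le_sup (f := fun k => (l.take k).sum.toNat)
      (Finset.mem_range.2 l.length.lt_succ_self)
    rwa [List.take_length] at this

lemma pathHeight_le_iff {l : List ℤ} {c : ℤ} :
    (pathHeight l : ℤ) ≤ c ↔ ∀ k, (l.take k).sum ≤ c := by
  refine ⟨fun h k => by have := toNat_sum_take_le_pathHeight l k; omega, fun h => ?_⟩
  lift c to ℕ using by simpa using h 0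
  exact_mod_cast Finset.sup_le fun k _ => by have := h k; omega

@[simp]
lemma pathHeight_nil : pathHeight [] = 0 := rfl

lemma pathHeight_cons (s : ℤ) (l : List ℤ) : pathHeight (s :: l) = (s + pathHeight l).toNat := by
  refine eq_of_forall_ge_iff fun m => ?_
  rw [← Nat.cast_le (α := ℤ), pathHeight_le_iff, Int.toNat_le, ← le_sub_iff_add_le',
    pathHeight_le_iff]
  refine ⟨fun h k => by simpa [le_sub_iff_add_le'] using h (k + 1), fun h k => ?_⟩
  cases k with
  | zero => simp
  | succ k => simpa [le_sub_iff_add_le'] using h k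

lemma pathHeight_append (l₁ l₂ : List ℤ) :
    pathHeight (l₁ ++ l₂) = max (pathHeight l₁) (l₁.sum + pathHeight l₂).toNat := by
  induction l₁ with
  | nil => simp
  | cons s l ih =>
    simp only [List.cons_append, pathHeight_cons, ih, List.sum_cons]
    omega

def DyckStep.toInt : DyckStep → ℤ
  | U => 1
  | D => -1

lemma DyckStep.toInt_injective : Injective DyckStep.toInt := by
  intro s t; cases s <;> cases t <;> simp [DyckStep.toInt]

lemma sum_map_toInt (L : List DyckStep) :
    (L.map DyckStep.toInt).sum = L.count U - L.count D := by
  induction L with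
  | nil => simp
  | cons s L ih => cases s <;> simp [DyckStep.toInt, ih] <;> ring

namespace DyckWord

def toPath (p : DyckWord) : List ℤ := p.toList.map DyckStep.toInt

lemma length_toPath (p : DyckWord) : p.toPath.length = 2 * p.semilength := by
  rw [toPath, List.length_map, two_mul_semilength_eq_length]

lemma isDyckPath_toPath (p : DyckWord) : IsDyckPath p.toPath := by
  refine ⟨?_, fun k => ?_, ?_⟩
  · simp only [toPath, List.mem_map]
    rintro _ ⟨s, -, rfl⟩
    cases s <;> simp [DyckStep.toInt]
  · rw [toPath, ← List.map_take, sum_map_toInt, sub_nonneg, Nat.cast_le]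
    exact p.count_D_le_count_U k
  · rw [toPath, sum_map_toInt, p.count_U_eq_count_D, sub_self]

lemma toPath_injective : Injective toPath := fun _ _ h =>
  DyckWord.ext (List.map_injective_iff.2 DyckStep.toInt_injective h)

lemma exists_toPath_eq {l : List ℤ} (hl : IsDyckPath l) : ∃ p : DyckWord, p.toPath = l := by
  obtain ⟨L, rfl⟩ : l ∈ Set.range (List.map DyckStep.toInt) := by
    rw [Set.range_list_map]
    intro s hs
    rcases hl.1 s hs with rfl | rfl
    exacts [⟨U, rfl⟩, ⟨D, rfl⟩]
  have hsum := hl.2.2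
  have hpre := hl.2.1
  simp only [← List.map_take, sum_map_toInt, sub_nonneg, sub_eq_zero, Nat.cast_le,
    Nat.cast_inj] at hsum hpre
  exact ⟨⟨L, hsum, hpre⟩, rfl⟩

def height (p : DyckWord) : ℕ := pathHeight p.toPath

@[simp]
lemma height_zero : (0 : DyckWord).height = 0 := rfl

lemma height_add (p q : DyckWord) : (p + q).height = max p.height q.height := by
  have : (p + q).toPath = p.toPath ++ q.toPath := List.map_append ..
  rw [height, this, pathHeight_append, (isDyckPath_toPath p).2.2, zero_add, Int.toNat_natCast]
  rfl

lemma height_nest (p : DyckWord) : p.nest.height = p.height + 1 := by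
  have : p.nest.toPath = 1 :: (p.toPath ++ [-1]) := by simp [toPath, nest, DyckStep.toInt]
  rw [height, this, pathHeight_cons, pathHeight_append, (isDyckPath_toPath p).2.2]
  simp [pathHeight_cons, height]
  omega

lemma height_le_semilength (p : DyckWord) : p.height ≤ p.semilength := by
  rw [height, ← Nat.cast_le (α := ℤ), pathHeight_le_iff]
  intro k
  rw [toPath, ← List.map_take, sum_map_toInt, semilength]
  have := (p.toList.take_sublist k).count_le U
  omega

lemma insidePart_nest_add (p q : DyckWord) : (p.nest + q).insidePart = p := by
  rw [insidePart_add p.nest_ne_zero, insidePart_nest]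

lemma outsidePart_nest_add (p q : DyckWord) : (p.nest + q).outsidePart = q := by
  rw [outsidePart_add p.nest_ne_zero, outsidePart_nest, zero_add]

lemma nest_add_ne_zero (p q : DyckWord) : p.nest + q ≠ 0 := fun h => by
  simpa using congrArg semilength h

instance finite_semilength_fiber (S : DyckWord → Prop) (n : ℕ) :
    Finite {p : {p : DyckWord // S p} // p.1.semilength = n} :=
  .of_injective (fun p => (⟨p.1.1, p.2⟩ : {p : DyckWord // p.semilength = n}))
    fun _ _ h => Subtype.ext (Subtype.ext (Subtype.mk.inj h))

noncomputable def heightLTGF (k : ℕ) : ℤ⟦X⟧ :=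
  weightGF fun p : {p : DyckWord // p.height < k} => p.1.semilength

noncomputable def heightGF (h : ℕ) : ℤ⟦X⟧ :=
  weightGF fun p : {p : DyckWord // p.height = h} => p.1.semilength

lemma heightLTGF_succ_eq_add (h : ℕ) : heightLTGF (h + 1) = heightLTGF h + heightGF h := by
  rw [heightLTGF, heightLTGF, heightGF, ← weightGF_sum_elim]
  refine (weightGF_eq_of_bijective (β := {p : DyckWord // p.height < h + 1})
    (Sum.elim (fun p => ⟨p.1, Nat.lt_succ_of_lt p.2⟩) (fun p => ⟨p.1, by have := p.2; omega⟩))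
    ⟨?_, ?_⟩ (by rintro (_ | _) <;> rfl)).symm
  · rintro (⟨p, hp⟩ | ⟨p, hp⟩) (⟨q, hq⟩ | ⟨q, hq⟩) hpq <;>
      simp only [Sum.elim_inl, Sum.elim_inr, Subtype.mk.injEq] at hpq <;> subst hpq
    · rfl
    · omega
    · omega
    · rfl
  · rintro ⟨p, hp⟩
    rcases (Nat.lt_succ_iff_lt_or_eq.1 hp) with hp | hp
    exacts [⟨.inl ⟨p, hp⟩, rfl⟩, ⟨.inr ⟨p, hp⟩, rfl⟩]

lemma heightLTGF_succ (k : ℕ) :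
    heightLTGF (k + 1) = 1 + X * (heightLTGF k * heightLTGF (k + 1)) := by
  let f : Option ({p : DyckWord // p.height < k} × {p : DyckWord // p.height < k + 1}) →
      {p : DyckWord // p.height < k + 1} :=
    fun o => o.elim ⟨0, by simp⟩ fun pq =>
      ⟨pq.1.1.nest + pq.2.1, by have := pq.1.2; have := pq.2.2; rw [height_add, height_nest]; omega⟩
  have hf : Bijective f := by
    constructor
    · rintro (_ | ⟨p, q⟩) (_ | ⟨p', q'⟩) h <;>
        have h' := congrArg Subtype.val h <;> simp only [f, Option.elim] at h'
      · rfl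
      · exact absurd h'.symm (nest_add_ne_zero _ _)
      · exact absurd h' (nest_add_ne_zero _ _)
      · have hp := congrArg insidePart h'
        have hq := congrArg outsidePart h'
        rw [insidePart_nest_add, insidePart_nest_add] at hp
        rw [outsidePart_nest_add, outsidePart_nest_add] at hq
        rw [Subtype.ext hp, Subtype.ext hq]
    · rintro ⟨p, hp⟩
      by_cases h0 : p = 0
      · exact ⟨none, Subtype.ext h0.symm⟩
      have hdec := nest_insidePart_add_outsidePart h0
      have hheight := height_add p.insidePart.nest p.outsidePart
      rw [hdec, height_nest] at hheight
      exact ⟨some (⟨p.insidePart, by omega⟩, ⟨p.outsidePart, by omega⟩), Subtype.ext hdec⟩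
  rw [heightLTGF, heightLTGF, ← weightGF_add, ← weightGF_option]
  refine (weightGF_eq_of_bijective f hf ?_).symm
  rintro (_ | ⟨p, q⟩)
  · rfl
  · simp only [f, Option.elim, semilength_add, semilength_nest]
    ring

lemma constantCoeff_heightLTGF_succ (k : ℕ) : constantCoeff (heightLTGF (k + 1)) = 1 := by
  rw [heightLTGF_succ]
  simp

lemma heightGF_mul_heightGF_succ (x : ℕ) :
    heightGF x * heightGF (x + 1) =
      X * (heightGF x + heightGF (x + 1)) *
        (heightGF x + heightGF (x + 1) - heightGF x * heightGF (x + 1)) := by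
  have hv := heightLTGF_succ x
  have hw := heightLTGF_succ (x + 1)
  have hv0 : heightLTGF (x + 1) ≠ 0 := fun h => by
    simpa [h] using constantCoeff_heightLTGF_succ x
  rw [eq_sub_of_add_eq' (heightLTGF_succ_eq_add x).symm,
    eq_sub_of_add_eq' (heightLTGF_succ_eq_add (x + 1)).symm]
  -- after multiplying by `v` the identity is a polynomial consequence of `hv` and `hw`
  apply mul_left_cancel₀ hv0
  set u := heightLTGF x
  set v := heightLTGF (x + 1)
  set w := heightLTGF (x + 1 + 1)
  linear_combination (v - u + (w - v) - (v - u) * (w - v)) * (hw - hv) + (w - v) * (w * hv - u * hw)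

lemma X_pow_dvd_heightGF (h : ℕ) : X ^ h ∣ heightGF h := by
  refine X_pow_dvd_iff.2 fun k hk => ?_
  rw [heightGF, coeff_weightGF, Nat.cast_eq_zero, Nat.card_eq_zero]
  left
  constructor
  rintro ⟨⟨p, rfl⟩, rfl⟩
  exact absurd (height_le_semilength p) (not_le.2 hk)

end DyckWord

open DyckWord

lemma P_eq_card (n : ℕ) (hs : List ℕ) :
    P n hs = Nat.card {q : ∀ i : Fin hs.length, {p : DyckWord // p.height = hs.get i} //
      ∑ i, (q i).1.semilength = n} := by
  have hlen (q : Fin hs.length → DyckWord) :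
      ∑ i, (q i).toPath.length = 2 * ∑ i, (q i).semilength := by
    simp only [length_toPath, Finset.mul_sum]
  refine (Nat.card_eq_of_bijective (fun q => ⟨fun i => (q.1 i).1.toPath,
    fun i => isDyckPath_toPath _, by exact_mod_cast (hlen _).trans (congrArg (2 * ·) q.2),
    fun i => (q.1 i).2⟩) ⟨?_, ?_⟩).symm
  · intro q q' h
    have h' := congrArg Subtype.val h
    exact Subtype.ext (funext fun i => Subtype.ext (toPath_injective (congrFun h' i)))
  · rintro ⟨p, hdyck, hsum, hheight⟩
    choose w hw using fun i => exists_toPath_eq (hdyck i)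
    refine ⟨⟨fun i => ⟨w i, by rw [height, hw]; exact hheight i⟩, ?_⟩, Subtype.ext (funext hw)⟩
    show ∑ i, (w i).semilength = n
    simp only [← hw] at hsum
    have h2 : ∑ i, (w i).toPath.length = 2 * n := by exact_mod_cast hsum
    rw [hlen] at h2
    omega

lemma P_eq_coeff (n : ℕ) (hs : List ℕ) : (P n hs : ℤ) = coeff n (hs.map heightGF).prod := by
  rw [P_eq_card, ← coeff_weightGF,
    weightGF_pi (α := fun i => {p : DyckWord // p.height = hs.get i}) fun _ p => p.1.semilength,
    ← Fin.prod_univ_fun_getElem]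
  rfl

lemma Qx_pair (n : ℤ) (x a b : ℕ) :
    Qx n x [a, b] = P n (List.replicate a x ++ List.replicate b (x + 1)) := by
  simp [Qx]

lemma Qx_pair_eq_coeff (n x a b : ℕ) :
    (Qx n x [a, b] : ℤ) = coeff n (heightGF x ^ a * heightGF (x + 1) ^ b) := by
  simp [Qx_pair, P_eq_coeff, List.prod_replicate]

lemma Qx_succ_pair (m x : ℕ) {a b : ℕ} (ha : 1 ≤ a) (hb : 1 ≤ b) :
    (Qx (m + 1 : ℕ) x [a, b] : ℤ) =
      2 * Qx m x [a, b] + Qx m x [a - 1, b + 1] + Qx m x [a + 1, b - 1]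
        - Qx m x [a + 1, b] - Qx m x [a, b + 1] := by
  obtain ⟨a, rfl⟩ := Nat.exists_eq_add_of_le' ha
  obtain ⟨b, rfl⟩ := Nat.exists_eq_add_of_le' hb
  simp only [Qx_pair_eq_coeff, Nat.add_sub_cancel]
  set f := heightGF x
  set g := heightGF (x + 1)
  have key : f ^ (a + 1) * g ^ (b + 1) = X * (2 * (f ^ (a + 1) * g ^ (b + 1)) +
      f ^ a * g ^ (b + 1 + 1) + f ^ (a + 1 + 1) * g ^ b - f ^ (a + 1 + 1) * g ^ (b + 1) -
      f ^ (a + 1) * g ^ (b + 1 + 1)) := by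
    linear_combination (f ^ a * g ^ b) * heightGF_mul_heightGF_succ x
  conv_lhs => rw [key, coeff_succ_X_mul]
  simp only [map_add, map_sub, two_mul]

lemma Qx_pair_self_eq_zero (n a : ℕ) {b : ℕ} (hb : 1 ≤ b) : Qx n n [a, b] = 0 := by
  have : X ^ (n + 1) ∣ heightGF n ^ a * heightGF (n + 1) ^ b :=
    (X_pow_dvd_heightGF (n + 1)).trans ((dvd_pow_self _ (by omega)).mul_left _)
  exact_mod_cast (Qx_pair_eq_coeff n n a b).trans (X_pow_dvd_iff.1 this n n.lt_succ_self)

lemma Q_natCast (n : ℕ) (l : List ℕ) : Q n l = ∑ x ∈ range (n + 1), Qx n x l := by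
  rw [Q, Int.toNat_natCast]

/-- For `n ≥ 1`, `a ≥ 1` and `b ≥ 1`,
`Q_n(a,b) = 2·Q_{n-1}(a,b) + Q_{n-1}(a−1, b+1) + Q_{n-1}(a+1, b−1)
  − Q_{n-1}(a+1, b) − Q_{n-1}(a, b+1)`. -/
theorem grouped_shorten_pair (n : ℕ) (hn : 1 ≤ n) (a b : ℕ) (ha : 1 ≤ a) (hb : 1 ≤ b) :
    (Q (n : ℤ) [a, b] : ℤ) =
      2 * Q ((n : ℤ) - 1) [a, b] + Q ((n : ℤ) - 1) [a - 1, b + 1]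
        + Q ((n : ℤ) - 1) [a + 1, b - 1]
        - Q ((n : ℤ) - 1) [a + 1, b] - Q ((n : ℤ) - 1) [a, b + 1] := by
  obtain ⟨m, rfl⟩ := Nat.exists_eq_add_of_le' hn
  rw [show ((m + 1 : ℕ) : ℤ) - 1 = m by push_cast; ring]
  simp only [Q_natCast, sum_range_succ _ (m + 1), Qx_pair_self_eq_zero _ _ hb, add_zero,
    Nat.cast_sum, Qx_succ_pair m _ ha hb, sum_add_distrib, sum_sub_distrib, mul_sum]
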